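/- Let N be an HPTP linear map on M_d(ℂ) with Choi matrix J_N. Then ‖J_N‖₁ / d ≤ 2^{ν(N)} ≤ ‖J_N‖₁, where ‖·‖₁ denotes the trace norm. -/

import Mathlib

open scoped Kronecker ComplexOrder
open Matrix

noncomputable section

/-- `id_k ⊗ N` applied blockwise. -/
def idTensor {n m : Type*} (k : Type*)
    (N : Matrix n n ℂ → Matrix m m ℂ)
    (M : Matrix (k × n) (k × n) ℂ) : Matrix (k × m) (k × m) ℂ :=
  Matrix.of fun p q => N (Matrix.of fun a b => M (p.1, a) (q.1, b)) p.2 q.2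

/-- Trace-preserving. -/
def IsTP {n m : Type*} [Fintype n] [Fintype m]
    (N : Matrix n n ℂ → Matrix m m ℂ) : Prop :=
  ∀ X, (N X).trace = X.trace

/-- Hermitian-preserving. -/
def IsHP {n m : Type*} (N : Matrix n n ℂ → Matrix m m ℂ) : Prop :=
  ∀ X, X.IsHermitian → (N X).IsHermitian

/-- Completely positive: for every `k`, `id_k ⊗ N` preserves positive semidefiniteness. -/
def IsCP {n m : Type*} [Fintype n] [Fintype m]
    (N : Matrix n n ℂ → Matrix m m ℂ) : Prop :=
  ∀ (k : ℕ) (M : Matrix (Fin k × n) (Fin k × n) ℂ),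
    M.PosSemidef → (idTensor (Fin k) N M).PosSemidef

/-- Completely positive and trace-preserving (quantum channel). -/
def IsCPTP {n m : Type*} [Fintype n] [Fintype m]
    (N : Matrix n n ℂ → Matrix m m ℂ) : Prop :=
  IsLinearMap ℂ N ∧ IsCP N ∧ IsTP N

/-- Completely positive and trace non-increasing. -/
def IsCPTN {n m : Type*} [Fintype n] [Fintype m]
    (N : Matrix n n ℂ → Matrix m m ℂ) : Prop :=
  IsLinearMap ℂ N ∧ IsCP N ∧ ∀ X : Matrix n n ℂ, X.PosSemidef → (N X).trace ≤ X.trace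

/-- Costs of finite quasiprobability decompositions of `N` into CPTP maps. -/
def decompCosts {n m : Type*} [Fintype n] [Fintype m]
    (N : Matrix n n ℂ → Matrix m m ℂ) : Set ℝ :=
  { c | ∃ (s : ℕ) (η : Fin s → ℝ) (O : Fin s → (Matrix n n ℂ → Matrix m m ℂ)),
      (∀ i, IsCPTP (O i)) ∧ (∀ X, N X = ∑ i, (η i : ℂ) • O i X) ∧ c = ∑ i, |η i| }

/-- The physical implementability `ν(N)`. -/
noncomputable def nu {n m : Type*} [Fintype n] [Fintype m]
    (N : Matrix n n ℂ → Matrix m m ℂ) : ℝ :=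
  Real.logb 2 (sInf (decompCosts N))

/-- The Choi matrix of a linear map. -/
def choiMatrix {n m : Type*} [DecidableEq n]
    (N : Matrix n n ℂ → Matrix m m ℂ) : Matrix (n × m) (n × m) ℂ :=
  Matrix.of fun p q => N (Matrix.single p.1 q.1 1) p.2 q.2

/-- Partial trace over the second tensor factor. -/
def ptraceB {n m : Type*} [Fintype m] (J : Matrix (n × m) (n × m) ℂ) :
    Matrix n n ℂ :=
  Matrix.of fun i j => ∑ a, J (i, a) (j, a)

/-- The trace norm of a matrix. -/
noncomputable def traceNorm {k : Type*} [Fintype k] [DecidableEq k]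
    (X : Matrix k k ℂ) : ℝ :=
  (((Matrix.posSemidef_conjTranspose_mul_self X).1.eigenvectorUnitary : Matrix k k ℂ) *
      Matrix.diagonal (((↑) : ℝ → ℂ) ∘ Real.sqrt ∘ (Matrix.posSemidef_conjTranspose_mul_self X).1.eigenvalues) *
      (star ((Matrix.posSemidef_conjTranspose_mul_self X).1.eigenvectorUnitary : Matrix k k ℂ))).trace.re

/-- Tensor product of two maps. -/
def tensorMap {n₁ n₂ m₂ : Type*} [Fintype n₁] [DecidableEq n₁]
    (M : Matrix n₁ n₁ ℂ → Matrix n₁ n₁ ℂ) (N : Matrix n₂ n₂ ℂ → Matrix m₂ m₂ ℂ)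
    (X : Matrix (n₁ × n₂) (n₁ × n₂) ℂ) : Matrix (n₁ × m₂) (n₁ × m₂) ℂ :=
  ∑ i : n₁, ∑ j : n₁,
    (M (Matrix.single i j 1)) ⊗ₖ (N (Matrix.of fun a b => X (i, a) (j, b)))



namespace NuAux

open Complex

section CD

variable {k : Type*} [Fintype k] [DecidableEq k]

/-- Conjugation of a real diagonal by the eigenvector unitary of a Hermitian matrix. -/
noncomputable def cd {A : Matrix k k ℂ} (hA : A.IsHermitian) (f : k → ℝ) : Matrix k k ℂ :=
  (hA.eigenvectorUnitary : Matrix k k ℂ) * Matrix.diagonal (fun i => (f i : ℂ)) *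
    (hA.eigenvectorUnitary : Matrix k k ℂ)ᴴ

variable {A : Matrix k k ℂ} (hA : A.IsHermitian)

lemma hU1 : (hA.eigenvectorUnitary : Matrix k k ℂ) *
    (hA.eigenvectorUnitary : Matrix k k ℂ)ᴴ = 1 := by
  simpa [Matrix.star_eq_conjTranspose] using
    Matrix.mem_unitaryGroup_iff.mp hA.eigenvectorUnitary.2

lemma hU2 : (hA.eigenvectorUnitary : Matrix k k ℂ)ᴴ *
    (hA.eigenvectorUnitary : Matrix k k ℂ) = 1 := by
  simpa [Matrix.star_eq_conjTranspose] using
    Matrix.mem_unitaryGroup_iff'.mp hA.eigenvectorUnitary.2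

lemma cd_psd (f : k → ℝ) (hf : ∀ i, 0 ≤ f i) : (cd hA f).PosSemidef := by
  have h : (Matrix.diagonal (fun i => (f i : ℂ))).PosSemidef :=
    Matrix.posSemidef_diagonal_iff.mpr fun i => Complex.zero_le_real.mpr (hf i)
  exact h.mul_mul_conjTranspose_same _

lemma cd_sub (f g : k → ℝ) : cd hA f - cd hA g = cd hA (fun i => f i - g i) := by
  simp only [cd, ← Matrix.sub_mul, ← Matrix.mul_sub, Matrix.diagonal_sub]
  congr 2
  push_cast
  rfl

lemma cd_add (f g : k → ℝ) : cd hA f + cd hA g = cd hA (fun i => f i + g i) := by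
  simp only [cd, ← Matrix.add_mul, ← Matrix.mul_add, Matrix.diagonal_add]
  congr 2
  push_cast
  rfl

lemma cd_mul (f g : k → ℝ) : cd hA f * cd hA g = cd hA (fun i => f i * g i) := by
  simp only [cd]
  rw [show ∀ (U D1 V D2 W : Matrix k k ℂ), U * D1 * V * (W * D2 * V) =
      U * (D1 * (V * W) * D2) * V from fun U D1 V D2 W => by noncomm_ring,
    hU2 hA, Matrix.mul_one, Matrix.diagonal_mul_diagonal]
  congr 2
  funext i
  simp

lemma cd_trace (f : k → ℝ) : (cd hA f).trace = ∑ i, (f i : ℂ) := by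
  rw [cd, Matrix.trace_mul_cycle, hU2 hA, Matrix.one_mul,
    Matrix.trace_diagonal]

lemma cd_const (c : ℝ) : cd hA (fun _ => c) = (c : ℂ) • 1 := by
  have : Matrix.diagonal (fun _ : k => (c : ℂ)) = (c : ℂ) • 1 := by
    ext i j
    rcases eq_or_ne i j with h | h <;>
      simp [Matrix.diagonal_apply, Matrix.one_apply, h]
  rw [cd, this, Matrix.mul_smul, Matrix.smul_mul, Matrix.mul_one, hU1 hA]

lemma cd_eigen : cd hA hA.eigenvalues = A := by
  conv_rhs => rw [hA.spectral_theorem]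
  rfl

lemma trace_eq_sum_eigen : A.trace = ∑ i, (hA.eigenvalues i : ℂ) := by
  conv_lhs => rw [← cd_eigen hA]
  rw [cd_trace]

lemma traceNorm_herm : traceNorm A = ∑ i, |hA.eigenvalues i| := by
  have habs : (cd hA (fun i => |hA.eigenvalues i|)).PosSemidef :=
    cd_psd hA _ fun i => abs_nonneg _
  have hsq : (cd hA (fun i => |hA.eigenvalues i|)) ^ 2 = Aᴴ * A := by
    rw [pow_two, cd_mul]
    have h1 : (fun i => |hA.eigenvalues i| * |hA.eigenvalues i|) =
        fun i => hA.eigenvalues i * hA.eigenvalues i := by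
      funext i; exact abs_mul_abs_self _
    rw [h1, ← cd_mul, cd_eigen, show Aᴴ = A from hA]
  have hB := (Matrix.posSemidef_conjTranspose_mul_self A).1
  have e1 : traceNorm A = (cfc Real.sqrt (Aᴴ * A)).trace.re := by
    rw [hB.cfc_eq, Matrix.IsHermitian.cfc, Unitary.conjStarAlgAut_apply]; rfl
  have hsa : IsSelfAdjoint A := hA
  have e2 : Aᴴ * A = cfc (fun x : ℝ => x ^ 2) A := by
    rw [cfc_pow_id A 2 hsa, pow_two, show Aᴴ = A from hA]
  have e3 : cfc Real.sqrt (Aᴴ * A) = cd hA (fun i => |hA.eigenvalues i|) := by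
    rw [e2, ← cfc_comp Real.sqrt (fun x : ℝ => x ^ 2) A hsa]
    rw [hA.cfc_eq, Matrix.IsHermitian.cfc, Unitary.conjStarAlgAut_apply]
    simp only [cd, Function.comp_def, Real.sqrt_sq_eq_abs]
    rfl
  rw [e1, e3, cd_trace, Complex.re_sum]
  simp

lemma psd_eq_conjTranspose_mul_self {P : Matrix k k ℂ} (hP : P.PosSemidef) :
    ∃ B : Matrix k k ℂ, P = Bᴴ * B := by
  refine ⟨cd hP.1 (fun i => Real.sqrt (hP.1.eigenvalues i)), ?_⟩
  rw [(cd_psd hP.1 _ fun i => Real.sqrt_nonneg _).1.eq, cd_mul]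
  conv_lhs => rw [← cd_eigen hP.1]
  congr 1
  funext i
  exact (Real.mul_self_sqrt (hP.eigenvalues_nonneg i)).symm

lemma psd_trace_nonneg {P : Matrix k k ℂ} (hP : P.PosSemidef) : 0 ≤ P.trace := by
  rw [Matrix.trace]
  apply Finset.sum_nonneg
  intro i _
  have h := hP.dotProduct_mulVec_nonneg (Pi.single i 1)
  simpa [dotProduct, Matrix.mulVec, Pi.single_apply, Finset.mul_sum,
    mul_ite, ite_mul] using h

lemma trace_mul_psd_nonneg {P Q : Matrix k k ℂ} (hP : P.PosSemidef) (hQ : Q.PosSemidef) :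
    0 ≤ (P * Q).trace := by
  obtain ⟨B, rfl⟩ := psd_eq_conjTranspose_mul_self hP
  rw [← Matrix.trace_mul_cycle]
  exact psd_trace_nonneg (hQ.mul_mul_conjTranspose_same B)

lemma psd_traceNorm {P : Matrix k k ℂ} (hP : P.PosSemidef) : traceNorm P = P.trace.re := by
  rw [traceNorm_herm hP.1]
  rw [trace_eq_sum_eigen hP.1, Complex.re_sum]
  simp only [Complex.ofReal_re]
  exact Finset.sum_congr rfl fun i _ => _root_.abs_of_nonneg (hP.eigenvalues_nonneg i)

/-- key inequality: trace norm of a Hermitian matrix is bounded by decomposition costs -/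
lemma herm_traceNorm_le {J : Matrix k k ℂ} (hJ : J.IsHermitian) {s : ℕ}
    (η : Fin s → ℝ) (P : Fin s → Matrix k k ℂ) (hP : ∀ i, (P i).PosSemidef)
    (hsum : J = ∑ i, (η i : ℂ) • P i) :
    traceNorm J ≤ ∑ i, |η i| * ((P i).trace).re := by
  set lam := hJ.eigenvalues with hlam
  set sgn : k → ℝ := fun i => if 0 ≤ lam i then 1 else -1 with hsgn
  set S := cd hJ sgn with hS
  have hSJ : ((S * J).trace).re = ∑ i, |lam i| := by
    conv_lhs => rw [show J = cd hJ lam from (cd_eigen hJ).symm]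
    rw [cd_mul, cd_trace, Complex.re_sum]
    apply Finset.sum_congr rfl
    intro i _
    simp only [Complex.ofReal_re, hsgn]
    rcases le_or_gt 0 (lam i) with h | h
    · rw [if_pos h, one_mul, _root_.abs_of_nonneg h]
    · rw [if_neg (not_le.mpr h), abs_of_neg h]; ring
  have hbound : ∀ i : Fin s, |((S * P i).trace).re| ≤ ((P i).trace).re := by
    intro i
    have hone : cd hJ (fun _ : k => (1 : ℝ)) = 1 := by rw [cd_const]; simp
    have h1 : (1 : Matrix k k ℂ) - S = cd hJ (fun j => 1 - sgn j) := by
      rw [hS, ← hone, cd_sub]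
    have h2 : (1 : Matrix k k ℂ) + S = cd hJ (fun j => 1 + sgn j) := by
      rw [hS, ← hone, cd_add]
    have hs1 : ∀ j, 0 ≤ 1 - sgn j := by
      intro j; simp only [hsgn]; split <;> norm_num
    have hs2 : ∀ j, 0 ≤ 1 + sgn j := by
      intro j; simp only [hsgn]; split <;> norm_num
    have hA1 : 0 ≤ (((1 : Matrix k k ℂ) - S) * P i).trace :=
      trace_mul_psd_nonneg (h1 ▸ cd_psd hJ _ hs1) (hP i)
    have hA2 : 0 ≤ (((1 : Matrix k k ℂ) + S) * P i).trace :=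
      trace_mul_psd_nonneg (h2 ▸ cd_psd hJ _ hs2) (hP i)
    rw [Matrix.sub_mul, Matrix.one_mul, Matrix.trace_sub] at hA1
    rw [Matrix.add_mul, Matrix.one_mul, Matrix.trace_add] at hA2
    rw [Complex.le_def] at hA1 hA2
    rw [abs_le]
    constructor
    · have := hA2.1; simp only [Complex.zero_re, Complex.add_re] at this; linarith
    · have := hA1.1; simp only [Complex.zero_re, Complex.sub_re] at this; linarith
  calc traceNorm J = ∑ i, |lam i| := traceNorm_herm hJ
    _ = ((S * J).trace).re := hSJ.symm
    _ = ∑ i : Fin s, η i * ((S * P i).trace).re := by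
        rw [hsum, Matrix.mul_sum, Matrix.trace_sum, Complex.re_sum]
        apply Finset.sum_congr rfl
        intro i _
        rw [Matrix.mul_smul, Matrix.trace_smul, smul_eq_mul, Complex.re_ofReal_mul]
    _ ≤ ∑ i, |η i| * ((P i).trace).re := by
        apply Finset.sum_le_sum
        intro i _
        calc η i * ((S * P i).trace).re ≤ |η i * ((S * P i).trace).re| := le_abs_self _
          _ = |η i| * |((S * P i).trace).re| := abs_mul _ _
          _ ≤ |η i| * ((P i).trace).re :=
              mul_le_mul_of_nonneg_left (hbound i) (abs_nonneg _)

end CD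

section Misc

variable {k : Type*} [Fintype k] [DecidableEq k]

lemma psd_real_smul {M : Matrix k k ℂ} (hM : M.PosSemidef) {c : ℝ} (hc : 0 ≤ c) :
    ((c : ℂ) • M).PosSemidef := by
  refine Matrix.PosSemidef.of_dotProduct_mulVec_nonneg ?_ ?_
  · rw [Matrix.IsHermitian, Matrix.conjTranspose_smul, hM.1]
    congr 1
    simp
  · intro x
    rw [Matrix.smul_mulVec, dotProduct_smul, smul_eq_mul]
    exact mul_nonneg (Complex.zero_le_real.mpr hc) (hM.dotProduct_mulVec_nonneg x)

lemma psd_trace_smul_one_sub {R : Matrix k k ℂ} (hR : R.PosSemidef) :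
    ((((R.trace.re : ℝ)) : ℂ) • 1 - R).PosSemidef := by
  have htr : R.trace.re = ∑ i, hR.1.eigenvalues i := by
    rw [trace_eq_sum_eigen hR.1, Complex.re_sum]; simp
  have key := cd_sub hR.1 (fun _ => R.trace.re) hR.1.eigenvalues
  rw [cd_const, cd_eigen] at key
  rw [key]
  refine cd_psd hR.1 _ fun i => sub_nonneg.mpr ?_
  rw [htr]
  exact Finset.single_le_sum (fun j _ => hR.eigenvalues_nonneg j) (Finset.mem_univ i)

end Misc

section PT

variable {n m : Type*} [Fintype n] [Fintype m] [DecidableEq n] [DecidableEq m]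

lemma ptraceB_add (J K : Matrix (n × m) (n × m) ℂ) :
    ptraceB (J + K) = ptraceB J + ptraceB K := by
  ext i j; simp [ptraceB, Finset.sum_add_distrib]

lemma ptraceB_smul (c : ℂ) (J : Matrix (n × m) (n × m) ℂ) :
    ptraceB (c • J) = c • ptraceB J := by
  ext i j; simp [ptraceB, Finset.mul_sum]

lemma trace_ptraceB (J : Matrix (n × m) (n × m) ℂ) : (ptraceB J).trace = J.trace := by
  simp [Matrix.trace, Matrix.diag, ptraceB, Fintype.sum_prod_type]

lemma ptraceB_psd {J : Matrix (n × m) (n × m) ℂ} (hJ : J.PosSemidef) :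
    (ptraceB J).PosSemidef := by
  refine Matrix.PosSemidef.of_dotProduct_mulVec_nonneg ?_ ?_
  · rw [Matrix.IsHermitian]
    ext i j
    simp only [Matrix.conjTranspose_apply, ptraceB, Matrix.of_apply, star_sum]
    refine Finset.sum_congr rfl fun a _ => ?_
    have h := congrFun (congrFun hJ.1 (i, a)) (j, a)
    simpa [Matrix.conjTranspose_apply] using h
  · intro x
    have inner : ∀ (a : m) (p : n × m),
        (J *ᵥ fun q : n × m => if q.2 = a then x q.1 else 0) p = ∑ j, J p (j, a) * x j := by
      intro a p
      simp only [Matrix.mulVec, dotProduct, Fintype.sum_prod_type, mul_ite, mul_zero,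
        Finset.sum_ite_eq', Finset.mem_univ, if_true]
    have rhs : ∀ a : m,
        dotProduct (star fun p : n × m => if p.2 = a then x p.1 else 0)
          (J *ᵥ fun p : n × m => if p.2 = a then x p.1 else 0)
        = ∑ i, ∑ j, star (x i) * (J (i, a) (j, a) * x j) := by
      intro a
      rw [dotProduct, Fintype.sum_prod_type]
      refine Finset.sum_congr rfl fun i _ => ?_
      calc ∑ b, (star fun q : n × m => if q.2 = a then x q.1 else 0) (i, b) *
              (J *ᵥ fun q : n × m => if q.2 = a then x q.1 else 0) (i, b)
          = ∑ b, (if b = a then star (x i) * ∑ j, J (i, b) (j, a) * x j else 0) := by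
            refine Finset.sum_congr rfl fun b _ => ?_
            rw [inner a (i, b), Pi.star_apply, apply_ite (star : ℂ → ℂ), star_zero, ite_mul,
              zero_mul]
        _ = star (x i) * ∑ j, J (i, a) (j, a) * x j := by
            simp only [Finset.sum_ite_eq', Finset.mem_univ, if_true]
        _ = ∑ j, star (x i) * (J (i, a) (j, a) * x j) := by
            rw [Finset.mul_sum]
    have key : dotProduct (star x) (ptraceB J *ᵥ x)
        = ∑ a : m, dotProduct (star (fun p : n × m => if p.2 = a then x p.1 else 0))
            (J *ᵥ (fun p : n × m => if p.2 = a then x p.1 else 0)) := by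
      calc dotProduct (star x) (ptraceB J *ᵥ x)
          = ∑ i, ∑ j, ∑ a, star (x i) * (J (i, a) (j, a) * x j) := by
            rw [dotProduct]
            refine Finset.sum_congr rfl fun i _ => ?_
            rw [Pi.star_apply, Matrix.mulVec, dotProduct, Finset.mul_sum]
            refine Finset.sum_congr rfl fun j _ => ?_
            show star (x i) * ((∑ a, J (i, a) (j, a)) * x j) = _
            rw [Finset.sum_mul, Finset.mul_sum]
        _ = ∑ a, ∑ i, ∑ j, star (x i) * (J (i, a) (j, a) * x j) := by
            calc ∑ i, ∑ j, ∑ a, star (x i) * (J (i, a) (j, a) * x j)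
                = ∑ i, ∑ a, ∑ j, star (x i) * (J (i, a) (j, a) * x j) :=
                  Finset.sum_congr rfl fun i _ => Finset.sum_comm
              _ = ∑ a, ∑ i, ∑ j, star (x i) * (J (i, a) (j, a) * x j) := Finset.sum_comm
        _ = ∑ a : m, dotProduct (star (fun p : n × m => if p.2 = a then x p.1 else 0))
            (J *ᵥ (fun p : n × m => if p.2 = a then x p.1 else 0)) :=
            Finset.sum_congr rfl fun a _ => (rhs a).symm
    rw [key]
    exact Finset.sum_nonneg fun a _ => hJ.dotProduct_mulVec_nonneg _

lemma psd_tensor_one {G : Matrix n n ℂ} (hG : G.PosSemidef) {c : ℝ} (hc : 0 ≤ c) :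
    (Matrix.of fun p q : n × m =>
      (c : ℂ) * G p.1 q.1 * (if p.2 = q.2 then 1 else 0)).PosSemidef := by
  refine Matrix.PosSemidef.of_dotProduct_mulVec_nonneg ?_ ?_
  · rw [Matrix.IsHermitian]
    ext p q
    rw [Matrix.conjTranspose_apply, Matrix.of_apply, Matrix.of_apply]
    have h : star (G q.1 p.1) = G p.1 q.1 := by
      have h0 := congrFun (congrFun hG.1 p.1) q.1
      rwa [Matrix.conjTranspose_apply] at h0
    have hcc : star ((c : ℝ) : ℂ) = ((c : ℝ) : ℂ) := by
      rw [Complex.star_def, Complex.conj_ofReal]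
    rcases eq_or_ne p.2 q.2 with hpq | hpq
    · rw [if_pos hpq.symm, if_pos hpq, mul_one, mul_one, star_mul', h, hcc, mul_comm]
    · rw [if_neg (Ne.symm hpq), if_neg hpq, mul_zero, mul_zero, star_zero]
  · intro x
    have key : dotProduct (star x)
        ((Matrix.of fun p q : n × m =>
          (c : ℂ) * G p.1 q.1 * (if p.2 = q.2 then 1 else 0)) *ᵥ x)
        = (c : ℂ) * ∑ a : m, dotProduct (star (fun i => x (i, a)))
            (G *ᵥ (fun i => x (i, a))) := by
      simp only [dotProduct, Matrix.mulVec, Matrix.of_apply, Fintype.sum_prod_type,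
        Pi.star_apply, mul_ite, mul_one, mul_zero, ite_mul, zero_mul,
        Finset.sum_ite_eq, Finset.sum_ite_eq', Finset.mem_univ, if_true, Finset.mul_sum]
      rw [Finset.sum_comm]
      refine Finset.sum_congr rfl fun a _ => Finset.sum_congr rfl fun i _ => ?_
      exact Finset.sum_congr rfl fun j _ => by ring
    rw [key]
    exact mul_nonneg (Complex.zero_le_real.mpr hc)
      (Finset.sum_nonneg fun a _ => hG.dotProduct_mulVec_nonneg _)

end PT

section MOC

variable {n m : Type*} [Fintype n] [Fintype m] [DecidableEq n] [DecidableEq m]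

def mapOfChoi (J : Matrix (n × m) (n × m) ℂ) (X : Matrix n n ℂ) : Matrix m m ℂ :=
  Matrix.of fun a b => ∑ i, ∑ j, X i j * J (i, a) (j, b)

lemma mapOfChoi_linear (J : Matrix (n × m) (n × m) ℂ) : IsLinearMap ℂ (mapOfChoi J) := by
  constructor
  · intro X Y
    ext a b
    simp [mapOfChoi, add_mul, Finset.sum_add_distrib]
  · intro c X
    ext a b
    simp only [mapOfChoi, Matrix.of_apply, Matrix.smul_apply, smul_eq_mul, Finset.mul_sum]
    exact Finset.sum_congr rfl fun i _ => Finset.sum_congr rfl fun j _ => by ring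

lemma mapOfChoi_smul (c : ℂ) (J : Matrix (n × m) (n × m) ℂ) (X : Matrix n n ℂ) :
    mapOfChoi (c • J) X = c • mapOfChoi J X := by
  ext a b
  simp only [mapOfChoi, Matrix.of_apply, Matrix.smul_apply, smul_eq_mul, Finset.mul_sum]
  exact Finset.sum_congr rfl fun i _ => Finset.sum_congr rfl fun j _ => by ring

lemma mapOfChoi_sub (J K : Matrix (n × m) (n × m) ℂ) (X : Matrix n n ℂ) :
    mapOfChoi (J - K) X = mapOfChoi J X - mapOfChoi K X := by
  ext a b
  simp [mapOfChoi, mul_sub, Finset.sum_sub_distrib]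

lemma mapOfChoi_choi {N : Matrix n n ℂ → Matrix m m ℂ} (hlin : IsLinearMap ℂ N)
    (X : Matrix n n ℂ) : mapOfChoi (choiMatrix N) X = N X := by
  have hX : X = ∑ i, ∑ j, X i j • Matrix.single i j (1 : ℂ) := by
    conv_lhs => rw [Matrix.matrix_eq_sum_single X]
    refine Finset.sum_congr rfl fun i _ => Finset.sum_congr rfl fun j _ => ?_
    rw [Matrix.smul_single, smul_eq_mul, mul_one]
  calc mapOfChoi (choiMatrix N) X
      = ∑ i, ∑ j, X i j • N (Matrix.single i j 1) := by
        ext a b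
        simp only [mapOfChoi, Matrix.of_apply, choiMatrix, Matrix.sum_apply,
          Matrix.smul_apply, smul_eq_mul]
    _ = N X := by
        conv_rhs => rw [hX]
        rw [show N = ⇑(IsLinearMap.mk' N hlin) from rfl, map_sum]
        refine Finset.sum_congr rfl fun i _ => ?_
        rw [map_sum]
        exact Finset.sum_congr rfl fun j _ => (LinearMap.map_smul _ _ _).symm

lemma mapOfChoi_tp {J : Matrix (n × m) (n × m) ℂ} (h : ptraceB J = 1) :
    IsTP (mapOfChoi J) := by
  intro X
  have h' : ∀ i j, ∑ a, J (i, a) (j, a) = if i = j then (1 : ℂ) else 0 := by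
    intro i j
    have := congrFun (congrFun h i) j
    simpa [ptraceB, Matrix.one_apply] using this
  rw [Matrix.trace, Matrix.trace]
  simp only [Matrix.diag, mapOfChoi, Matrix.of_apply]
  rw [Finset.sum_comm]
  calc ∑ i, ∑ a, ∑ j, X i j * J (i, a) (j, a)
      = ∑ i, ∑ j, X i j * ∑ a, J (i, a) (j, a) := by
        refine Finset.sum_congr rfl fun i _ => ?_
        rw [Finset.sum_comm]
        exact Finset.sum_congr rfl fun j _ => by rw [Finset.mul_sum]
    _ = ∑ i, X i i := by
        refine Finset.sum_congr rfl fun i _ => ?_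
        simp only [h', mul_ite, mul_one, mul_zero]
        simp
    _ = ∑ i, X.diag i := rfl

private lemma sum_swap4 {α β γ δ : Type*} [Fintype α] [Fintype β] [Fintype γ] [Fintype δ]
    (F : α → β → γ → δ → ℂ) :
    ∑ i, ∑ j, ∑ r, ∑ t, F i j r t = ∑ r, ∑ t, ∑ i, ∑ j, F i j r t := by
  calc ∑ i, ∑ j, ∑ r, ∑ t, F i j r t
      = ∑ i, ∑ r, ∑ j, ∑ t, F i j r t :=
        Finset.sum_congr rfl fun i _ => Finset.sum_comm
    _ = ∑ r, ∑ i, ∑ j, ∑ t, F i j r t := Finset.sum_comm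
    _ = ∑ r, ∑ i, ∑ t, ∑ j, F i j r t :=
        Finset.sum_congr rfl fun r _ => Finset.sum_congr rfl fun i _ => Finset.sum_comm
    _ = ∑ r, ∑ t, ∑ i, ∑ j, F i j r t :=
        Finset.sum_congr rfl fun r _ => Finset.sum_comm

lemma mapOfChoi_cp {J : Matrix (n × m) (n × m) ℂ} (hJ : J.PosSemidef) :
    IsCP (mapOfChoi J) := by
  intro s M hM
  obtain ⟨C, hC⟩ := NuAux.psd_eq_conjTranspose_mul_self hJ
  obtain ⟨B, hB⟩ := NuAux.psd_eq_conjTranspose_mul_self hM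
  have key : idTensor (Fin s) (mapOfChoi J) M =
      (Matrix.of fun (u : (Fin s × n) × (n × m)) (q : Fin s × m) =>
        ∑ j, B u.1 (q.1, j) * C u.2 (j, q.2))ᴴ *
      (Matrix.of fun (u : (Fin s × n) × (n × m)) (q : Fin s × m) =>
        ∑ j, B u.1 (q.1, j) * C u.2 (j, q.2)) := by
    ext p q
    simp only [idTensor, mapOfChoi, Matrix.of_apply, hB, hC, Matrix.mul_apply,
      Matrix.conjTranspose_apply]
    calc ∑ i, ∑ j, (∑ r, star (B r (p.1, i)) * B r (q.1, j)) *
            (∑ t, star (C t (i, p.2)) * C t (j, q.2))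
        = ∑ i, ∑ j, ∑ r, ∑ t, (star (B r (p.1, i)) * B r (q.1, j)) *
            (star (C t (i, p.2)) * C t (j, q.2)) := by
          refine Finset.sum_congr rfl fun i _ => Finset.sum_congr rfl fun j _ => ?_
          rw [Finset.sum_mul_sum Finset.univ Finset.univ
            (fun r => star (B r (p.1, i)) * B r (q.1, j))
            (fun t => star (C t (i, p.2)) * C t (j, q.2))]
      _ = ∑ r, ∑ t, ∑ i, ∑ j, (star (B r (p.1, i)) * B r (q.1, j)) *
            (star (C t (i, p.2)) * C t (j, q.2)) := sum_swap4 _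
      _ = ∑ u : (Fin s × n) × (n × m),
            star (∑ i, B u.1 (p.1, i) * C u.2 (i, p.2)) *
            (∑ j, B u.1 (q.1, j) * C u.2 (j, q.2)) := by
          conv_rhs => rw [Fintype.sum_prod_type]
          refine Finset.sum_congr rfl fun r _ => Finset.sum_congr rfl fun t _ => ?_
          rw [star_sum, Finset.sum_mul_sum Finset.univ Finset.univ
            (fun i => star (B r (p.1, i) * C t (i, p.2)))
            (fun j => B r (q.1, j) * C t (j, q.2))]
          refine Finset.sum_congr rfl fun i _ => Finset.sum_congr rfl fun j _ => ?_
          rw [star_mul']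
          ring
  rw [key]
  exact Matrix.posSemidef_conjTranspose_mul_self _

end MOC

section Choi

variable {n m : Type*} [Fintype n] [Fintype m] [DecidableEq n] [DecidableEq m]
variable {N : Matrix n n ℂ → Matrix m m ℂ}

lemma map_conjT (hlin : IsLinearMap ℂ N) (hHP : IsHP N) (X : Matrix n n ℂ) :
    N Xᴴ = (N X)ᴴ := by
  set L := IsLinearMap.mk' N hlin with hL
  have hNL : ∀ Y, N Y = L Y := fun Y => rfl
  set A := X + Xᴴ with hA
  set B := Complex.I • (X - Xᴴ) with hB
  have hAh : A.IsHermitian := by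
    rw [Matrix.IsHermitian, hA, Matrix.conjTranspose_add, Matrix.conjTranspose_conjTranspose,
      add_comm]
  have hBh : B.IsHermitian := by
    rw [Matrix.IsHermitian, hB, Matrix.conjTranspose_smul, Matrix.conjTranspose_sub,
      Matrix.conjTranspose_conjTranspose, Complex.star_def, Complex.conj_I, neg_smul,
      smul_sub, smul_sub]
    abel
  have hmul : (-(Complex.I) / 2) * Complex.I = 2⁻¹ := by
    rw [div_mul_eq_mul_div, neg_mul, Complex.I_mul_I]
    norm_num
  have hX : X = (2⁻¹ : ℂ) • A + (-(Complex.I) / 2) • B := by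
    rw [hA, hB, smul_smul, hmul]
    module
  have hX' : Xᴴ = (2⁻¹ : ℂ) • A - (-(Complex.I) / 2) • B := by
    rw [hA, hB, smul_smul, hmul]
    module
  have e0 : N X = (2⁻¹ : ℂ) • N A + (-(Complex.I) / 2) • N B := by
    conv_lhs => rw [hX]
    simp only [hNL, map_add, _root_.map_smul]
  have e1 : N Xᴴ = (2⁻¹ : ℂ) • N A - (-(Complex.I) / 2) • N B := by
    conv_lhs => rw [hX']
    simp only [hNL, map_sub, _root_.map_smul]
  rw [e0, e1, Matrix.conjTranspose_add, Matrix.conjTranspose_smul, Matrix.conjTranspose_smul,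
    hHP A hAh, hHP B hBh]
  have c1 : star (2⁻¹ : ℂ) = (2⁻¹ : ℂ) := by
    rw [star_inv₀]
    norm_num
  have c2 : star (-(Complex.I) / 2) = -(-(Complex.I) / 2) := by
    rw [Complex.star_def, map_div₀, map_neg, Complex.conj_I, map_ofNat]
    ring
  rw [c1, c2, neg_smul, ← sub_eq_add_neg]

lemma choi_herm (hlin : IsLinearMap ℂ N) (hHP : IsHP N) : (choiMatrix N).IsHermitian := by
  have hstd : ∀ i j : n, (Matrix.single j i (1 : ℂ))ᴴ = Matrix.single i j 1 := by
    intro i j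
    ext a b
    simp [Matrix.conjTranspose_apply, Matrix.single, and_comm]
  rw [Matrix.IsHermitian]
  ext ⟨i, a⟩ ⟨j, b⟩
  rw [Matrix.conjTranspose_apply]
  show star (choiMatrix N (j, b) (i, a)) = choiMatrix N (i, a) (j, b)
  simp only [choiMatrix, Matrix.of_apply]
  have h := map_conjT hlin hHP (Matrix.single j i (1 : ℂ))
  rw [hstd i j] at h
  rw [h, Matrix.conjTranspose_apply]

lemma ptraceB_choi (hTP : IsTP N) : ptraceB (choiMatrix N) = 1 := by
  ext i j
  have h := hTP (Matrix.single i j (1 : ℂ))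
  have htr : (Matrix.single i j (1 : ℂ)).trace = if i = j then 1 else 0 := by
    rcases eq_or_ne i j with hij | hij
    · subst hij
      rw [if_pos rfl, Matrix.trace_single_eq_same]
    · rw [if_neg hij, Matrix.trace_single_eq_of_ne i j _ hij]
  simp only [ptraceB, Matrix.of_apply, Matrix.one_apply]
  rw [← htr, ← h, Matrix.trace]
  rfl

lemma trace_choi (hTP : IsTP N) : (choiMatrix N).trace = (Fintype.card n : ℂ) := by
  rw [← trace_ptraceB (choiMatrix N), ptraceB_choi hTP, Matrix.trace_one]

end Choi

lemma choi_psd {d : ℕ} {O : Matrix (Fin d) (Fin d) ℂ → Matrix (Fin d) (Fin d) ℂ}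
    (hCP : IsCP O) : (choiMatrix O).PosSemidef := by
  set B : Matrix Unit (Fin d × Fin d) ℂ :=
    Matrix.of fun _ p => if p.1 = p.2 then 1 else 0 with hBdef
  have hΩ : (Bᴴ * B).PosSemidef := Matrix.posSemidef_conjTranspose_mul_self B
  have h := hCP d (Bᴴ * B) hΩ
  have key : choiMatrix O = idTensor (Fin d) O (Bᴴ * B) := by
    ext ⟨p1, p2⟩ ⟨q1, q2⟩
    show choiMatrix O (p1, p2) (q1, q2) = idTensor (Fin d) O (Bᴴ * B) (p1, p2) (q1, q2)
    simp only [choiMatrix, idTensor, Matrix.of_apply]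
    congr 1
    ext a b
    simp only [Matrix.of_apply, Matrix.mul_apply, Matrix.conjTranspose_apply, hBdef,
      Matrix.single, Finset.univ_unique, Finset.sum_singleton]
    rcases eq_or_ne p1 a with h1 | h1 <;> rcases eq_or_ne q1 b with h2 | h2 <;>
      simp [h1, h2]
  rw [key]
  exact h

end NuAux

/-- trace norm bounds: `‖J_N‖₁ / d ≤ 2^{ν(N)} ≤ ‖J_N‖₁`. -/
theorem nu_trace_norm_bounds {d : ℕ} (hd : 0 < d)
    (N : Matrix (Fin d) (Fin d) ℂ → Matrix (Fin d) (Fin d) ℂ)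
    (hlin : IsLinearMap ℂ N) (hHP : IsHP N) (hTP : IsTP N) :
    traceNorm (choiMatrix N) / d ≤ (2 : ℝ) ^ nu N ∧
    (2 : ℝ) ^ nu N ≤ traceNorm (choiMatrix N) := by
  classical
  have hd' : (0 : ℝ) < d := Nat.cast_pos.mpr hd
  have hd1 : (1 : ℝ) ≤ d := Nat.one_le_cast.mpr hd
  set J := choiMatrix N with hJdef
  have hJH : J.IsHermitian := NuAux.choi_herm hlin hHP
  have hptr : ptraceB J = 1 := NuAux.ptraceB_choi hTP
  set lam : Fin d × Fin d → ℝ := hJH.eigenvalues with hlam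
  have htrJ : J.trace = (d : ℂ) := by
    rw [hJdef, NuAux.trace_choi hTP]
    simp
  have hsumlam : ∑ i, lam i = (d : ℝ) := by
    have h1 := NuAux.trace_eq_sum_eigen hJH
    rw [htrJ] at h1
    have h2 := congrArg Complex.re h1
    simpa [Complex.re_sum] using h2.symm
  set fp : Fin d × Fin d → ℝ := fun i => max (lam i) 0 with hfp
  set fm : Fin d × Fin d → ℝ := fun i => max (-lam i) 0 with hfm
  have hfp0 : ∀ i, 0 ≤ fp i := fun i => le_max_right _ _
  have hfm0 : ∀ i, 0 ≤ fm i := fun i => le_max_right _ _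
  have habs : ∀ i, |lam i| = fp i + fm i := by
    intro i
    simp only [hfp, hfm]
    rcases le_total 0 (lam i) with h | h
    · rw [max_eq_left h, max_eq_right (neg_nonpos.mpr h), add_zero, abs_of_nonneg h]
    · rw [max_eq_right h, max_eq_left (neg_nonneg.mpr h), zero_add, abs_of_nonpos h]
  have hsub : ∀ i, fp i - fm i = lam i := by
    intro i
    simp only [hfp, hfm]
    rcases le_total 0 (lam i) with h | h
    · rw [max_eq_left h, max_eq_right (neg_nonpos.mpr h), sub_zero]
    · rw [max_eq_right h, max_eq_left (neg_nonneg.mpr h), zero_sub, neg_neg]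
  set t : ℝ := ∑ i, fm i with ht
  have ht0 : 0 ≤ t := Finset.sum_nonneg fun i _ => hfm0 i
  have hfpeq : ∀ i, fp i = lam i + fm i := fun i => by
    have h := hsub i; linarith
  have htrace_norm : traceNorm J = d + 2 * t := by
    rw [NuAux.traceNorm_herm hJH]
    calc ∑ i, |lam i| = ∑ i, (fp i + fm i) := Finset.sum_congr rfl fun i _ => habs i
      _ = ∑ i, ((lam i + fm i) + fm i) := Finset.sum_congr rfl fun i _ => by rw [hfpeq i]
      _ = (∑ i, lam i) + ((∑ i, fm i) + ∑ i, fm i) := by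
          rw [Finset.sum_add_distrib, Finset.sum_add_distrib]
          ring
      _ = d + 2 * t := by rw [hsumlam, ← ht]; ring
  set Ap := NuAux.cd hJH fp with hAp
  set Am := NuAux.cd hJH fm with hAm
  have hApPsd : Ap.PosSemidef := NuAux.cd_psd hJH fp hfp0
  have hAmPsd : Am.PosSemidef := NuAux.cd_psd hJH fm hfm0
  have hJApAm : Ap - Am = J := by
    rw [hAp, hAm, NuAux.cd_sub, show (fun i => fp i - fm i) = lam from funext hsub, hlam,
      NuAux.cd_eigen]
  have htrAm : Am.trace = ((t : ℝ) : ℂ) := by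
    rw [hAm, NuAux.cd_trace, ← Complex.ofReal_sum, ← ht]
  set R := ptraceB Am with hR
  have hRpsd : R.PosSemidef := NuAux.ptraceB_psd hAmPsd
  have htrR : R.trace = ((t : ℝ) : ℂ) := by rw [hR, NuAux.trace_ptraceB, htrAm]
  have hRre : R.trace.re = t := by rw [htrR, Complex.ofReal_re]
  set G : Matrix (Fin d) (Fin d) ℂ := ((t : ℝ) : ℂ) • 1 - R with hGdef
  have hGpsd : G.PosSemidef := by
    have h := NuAux.psd_trace_smul_one_sub hRpsd
    rwa [hRre] at h
  set GK : Matrix (Fin d × Fin d) (Fin d × Fin d) ℂ :=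
    Matrix.of (fun p q : Fin d × Fin d =>
      (((d : ℝ)⁻¹ : ℝ) : ℂ) * G p.1 q.1 * (if p.2 = q.2 then 1 else 0)) with hGK
  have hGKpsd : GK.PosSemidef := NuAux.psd_tensor_one hGpsd (inv_nonneg.mpr hd'.le)
  have hdc : ((d : ℕ) : ℂ) ≠ 0 := Nat.cast_ne_zero.mpr hd.ne'
  have hptrGK : ptraceB GK = G := by
    ext i j
    show ∑ a : Fin d, GK (i, a) (j, a) = G i j
    have hterm : ∀ a : Fin d, GK (i, a) (j, a) = ((d : ℕ) : ℂ)⁻¹ * G i j := by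
      intro a
      show (((d : ℝ)⁻¹ : ℝ) : ℂ) * G i j * (if a = a then 1 else 0) = ((d : ℕ) : ℂ)⁻¹ * G i j
      rw [if_pos rfl, mul_one]
      congr 1
      push_cast
      ring
    rw [Finset.sum_congr rfl fun a _ => hterm a, Finset.sum_const, Finset.card_univ,
      Fintype.card_fin, nsmul_eq_mul, ← mul_assoc, mul_inv_cancel₀ hdc, one_mul]
  set J1 := Ap + GK with hJ1
  set J2 := Am + GK with hJ2
  have hJ1psd : J1.PosSemidef := hApPsd.add hGKpsd
  have hJ2psd : J2.PosSemidef := hAmPsd.add hGKpsd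
  have hptrAp : ptraceB Ap = 1 + R := by
    rw [show Ap = J + Am from eq_add_of_sub_eq hJApAm, NuAux.ptraceB_add, hptr, hR]
  have hptrJ1 : ptraceB J1 = ((1 + t : ℝ) : ℂ) • 1 := by
    rw [hJ1, NuAux.ptraceB_add, hptrAp, hptrGK, hGdef, Complex.ofReal_add,
      Complex.ofReal_one, add_smul, one_smul]
    abel
  have hptrJ2 : ptraceB J2 = ((t : ℝ) : ℂ) • 1 := by
    rw [hJ2, NuAux.ptraceB_add, ← hR, hptrGK, hGdef]
    abel
  have hJ12 : J1 - J2 = J := by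
    rw [hJ1, hJ2, add_sub_add_right_eq_sub, hJApAm]
  set c0 : ℝ := 1 + 2 * t with hc0
  have hc0mem : c0 ∈ decompCosts N := by
    rcases eq_or_lt_of_le ht0 with ht0' | htpos
    · -- t = 0 : N itself is CPTP
      have hsum0 : ∑ i, fm i = 0 := by rw [← ht, ← ht0']
      have hfmzero : ∀ i, fm i = 0 := fun i =>
        (Finset.sum_eq_zero_iff_of_nonneg fun j _ => hfm0 j).mp hsum0 i (Finset.mem_univ i)
      have hAmzero : Am = 0 := by
        rw [hAm, show fm = fun _ => (0 : ℝ) from funext hfmzero, NuAux.cd_const]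
        simp
      have hJpsd : J.PosSemidef := by
        rw [← hJApAm, hAmzero, sub_zero]; exact hApPsd
      have hNCP : IsCP N := by
        have hfun : NuAux.mapOfChoi J = N := funext fun X => NuAux.mapOfChoi_choi hlin X
        rw [← hfun]
        exact NuAux.mapOfChoi_cp hJpsd
      refine ⟨1, fun _ => 1, fun _ => N, fun _ => ⟨hlin, hNCP, hTP⟩, fun X => by simp, ?_⟩
      rw [hc0, ← ht0']
      norm_num
    · -- t > 0
      have h1t : (0 : ℝ) < 1 + t := by linarith
      set K1 := ((((1 + t)⁻¹ : ℝ)) : ℂ) • J1 with hK1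
      set K2 := (((t⁻¹ : ℝ)) : ℂ) • J2 with hK2
      have hK1psd : K1.PosSemidef := NuAux.psd_real_smul hJ1psd (inv_nonneg.mpr h1t.le)
      have hK2psd : K2.PosSemidef := NuAux.psd_real_smul hJ2psd (inv_nonneg.mpr htpos.le)
      have hptrK1 : ptraceB K1 = 1 := by
        rw [hK1, NuAux.ptraceB_smul, hptrJ1, smul_smul, ← Complex.ofReal_mul,
          inv_mul_cancel₀ h1t.ne', Complex.ofReal_one, one_smul]
      have hptrK2 : ptraceB K2 = 1 := by
        rw [hK2, NuAux.ptraceB_smul, hptrJ2, smul_smul, ← Complex.ofReal_mul,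
          inv_mul_cancel₀ htpos.ne', Complex.ofReal_one, one_smul]
      have hO1 : IsCPTP (NuAux.mapOfChoi K1) :=
        ⟨NuAux.mapOfChoi_linear _, NuAux.mapOfChoi_cp hK1psd, NuAux.mapOfChoi_tp hptrK1⟩
      have hO2 : IsCPTP (NuAux.mapOfChoi K2) :=
        ⟨NuAux.mapOfChoi_linear _, NuAux.mapOfChoi_cp hK2psd, NuAux.mapOfChoi_tp hptrK2⟩
      have e1 : ((1 + t : ℝ) : ℂ) * ((((1 + t)⁻¹ : ℝ)) : ℂ) = 1 := by
        rw [← Complex.ofReal_mul, mul_inv_cancel₀ h1t.ne', Complex.ofReal_one]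
      have e2 : ((-t : ℝ) : ℂ) * (((t⁻¹ : ℝ)) : ℂ) = -1 := by
        rw [← Complex.ofReal_mul, show (-t) * t⁻¹ = (-1 : ℝ) by field_simp]
        norm_num
      refine ⟨2, ![1 + t, -t], ![NuAux.mapOfChoi K1, NuAux.mapOfChoi K2], ?_, ?_, ?_⟩
      · intro i
        fin_cases i
        · exact hO1
        · exact hO2
      · intro X
        rw [Fin.sum_univ_two]
        simp only [Matrix.cons_val_zero, Matrix.cons_val_one, Matrix.head_cons]
        have key : ((1 + t : ℝ) : ℂ) • NuAux.mapOfChoi K1 X +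
            ((-t : ℝ) : ℂ) • NuAux.mapOfChoi K2 X = N X := by
          rw [hK1, hK2, NuAux.mapOfChoi_smul, NuAux.mapOfChoi_smul, smul_smul, smul_smul,
            e1, e2, one_smul, neg_one_smul, ← sub_eq_add_neg, ← NuAux.mapOfChoi_sub, hJ12,
            NuAux.mapOfChoi_choi hlin]
        exact key.symm
      · rw [Fin.sum_univ_two]
        simp only [Matrix.cons_val_zero, Matrix.cons_val_one, Matrix.head_cons]
        rw [abs_of_pos h1t, abs_neg, abs_of_pos htpos, hc0]
        ring
  have hlow : ∀ c ∈ decompCosts N, traceNorm J ≤ (d : ℝ) * c := by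
    rintro c ⟨s, η, O, hO, hsum, rfl⟩
    have hchoisum : J = ∑ i, (η i : ℂ) • choiMatrix (O i) := by
      ext p q
      show choiMatrix N p q = _
      simp only [choiMatrix, Matrix.of_apply, hsum (Matrix.single p.1 q.1 1),
        Matrix.sum_apply, Matrix.smul_apply, smul_eq_mul]
    have hle := NuAux.herm_traceNorm_le hJH η (fun i => choiMatrix (O i))
      (fun i => NuAux.choi_psd (hO i).2.1) hchoisum
    have htrOi : ∀ i, ((choiMatrix (O i)).trace).re = (d : ℝ) := by
      intro i
      rw [NuAux.trace_choi (hO i).2.2]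
      simp
    calc traceNorm J ≤ ∑ i, |η i| * ((choiMatrix (O i)).trace).re := hle
      _ = ∑ i, |η i| * (d : ℝ) := Finset.sum_congr rfl fun i _ => by rw [htrOi i]
      _ = (d : ℝ) * ∑ i, |η i| := by
          rw [Finset.mul_sum]
          exact Finset.sum_congr rfl fun i _ => mul_comm _ _
  have hlow' : ∀ c ∈ decompCosts N, traceNorm J / d ≤ c := fun c hc =>
    (div_le_iff₀ hd').mpr (by rw [mul_comm]; exact hlow c hc)
  have hne : (decompCosts N).Nonempty := ⟨c0, hc0mem⟩
  have hbdd : BddBelow (decompCosts N) := ⟨traceNorm J / d, fun c hc => hlow' c hc⟩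
  have hInfge : traceNorm J / d ≤ sInf (decompCosts N) := le_csInf hne hlow'
  have hInfle : sInf (decompCosts N) ≤ c0 := csInf_le hbdd hc0mem
  have htn_pos : 0 < traceNorm J := by rw [htrace_norm]; linarith
  have hInfpos : 0 < sInf (decompCosts N) := lt_of_lt_of_le (div_pos htn_pos hd') hInfge
  have hpow : (2 : ℝ) ^ nu N = sInf (decompCosts N) := by
    rw [nu]
    exact Real.rpow_logb (by norm_num) (by norm_num) hInfpos
  constructor
  · rw [hpow]; exact hInfge
  · rw [hpow]
    refine hInfle.trans ?_
    rw [htrace_norm, hc0]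
    linarith

end
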